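/- Let r ≥ 2, e ≥ 1 with e dividing r+1, B_j = r^{-1}(r-1)^j + (-1)^j(1-r^{-1}), and N_k as defined by the exponential-formula sum. Then N₄ = e²(r²-1)·((e+3)r² - 6er + 6e - 3). -/

import Mathlib

/-- `B_j = r⁻¹(r-1)^j + (-1)^j(1 - r⁻¹)`. -/
noncomputable def Bcoef (r : ℚ) (j : ℕ) : ℚ :=
  r⁻¹ * (r - 1) ^ j + (-1) ^ j * (1 - r⁻¹)

/-- Sequences `(λ_0, …, λ_k)` of non-negative integers with `λ_0 = λ_1 = 0`
and `∑ j·λ_j = k` (any sequence with `∑_{j ≥ 2} j λ_j = k` vanishes beyond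
index `k`, so this captures all finitely supported such sequences). -/
def partSeqs (k : ℕ) : Finset (Fin (k + 1) → ℕ) :=
  (Fintype.piFinset fun _ => Finset.range (k + 1)).filter
    fun lam => (∑ j : Fin (k + 1), (j : ℕ) * lam j) = k ∧
      ∀ j : Fin (k + 1), (j : ℕ) < 2 → lam j = 0

/-- `N_k = k! e^k ∑_{∑ jλ_j = k} C((r+1)/e, ∑λ_j)(∑λ_j)! ∏_j (B_j/j!)^{λ_j}/λ_j!`. -/
noncomputable def Ncoef (r e k : ℕ) : ℚ :=
  (k.factorial : ℚ) * (e : ℚ) ^ k *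
    ∑ lam ∈ partSeqs k,
      (((r + 1) / e).choose (∑ j : Fin (k + 1), lam j) : ℚ) *
        ((∑ j : Fin (k + 1), lam j).factorial : ℚ) *
        ∏ j : Fin (k + 1), (Bcoef (r : ℚ) (j : ℕ) / ((j : ℕ).factorial : ℚ)) ^ lam j /
          ((lam j).factorial : ℚ)

/-! Only the partitions `2 + 2` and `4` of `4` avoid the part `1`, so `N₄` has just two terms.
Since `e ∣ r + 1`, the natural-number quotient `(r + 1) / e` is the exact rational one, and what
remains is polynomial algebra in `r` and `e`. -/

lemma partSeqs_four : partSeqs 4 = {![0, 0, 2, 0, 0], ![0, 0, 0, 0, 1]} := by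
  set_option maxRecDepth 10000 in decide

lemma Ncoef_four (r e : ℕ) :
    Ncoef r e 4 = (e : ℚ) ^ 4 * (6 * (((r + 1) / e).choose 2 : ℚ) * Bcoef r 2 ^ 2 +
      (((r + 1) / e : ℕ) : ℚ) * Bcoef r 4) := by
  have hne : (![0, 0, 2, 0, 0] : Fin 5 → ℕ) ≠ ![0, 0, 0, 0, 1] := by decide
  rw [Ncoef, partSeqs_four, Finset.sum_pair hne]
  norm_num [Fin.sum_univ_succ, Fin.prod_univ_succ, Nat.factorial]
  ring

lemma Bcoef_eq_div {r : ℚ} (hr : r ≠ 0) (j : ℕ) :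
    Bcoef r j = ((r - 1) ^ j + (-1) ^ j * (r - 1)) / r := by
  rw [Bcoef]
  field_simp

lemma Bcoef_two {r : ℚ} (hr : r ≠ 0) : Bcoef r 2 = r - 1 := by
  rw [Bcoef_eq_div hr]
  field_simp
  ring

lemma Bcoef_four {r : ℚ} (hr : r ≠ 0) : Bcoef r 4 = (r - 1) * (r ^ 2 - 3 * r + 3) := by
  rw [Bcoef_eq_div hr]
  field_simp
  ring

theorem stmt13_general (r e : ℕ) (hr : 2 ≤ r) (hdvd : e ∣ r + 1) :
    Ncoef r e 4 = (e : ℚ) ^ 2 * ((r : ℚ) ^ 2 - 1) *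
      (((e : ℚ) + 3) * (r : ℚ) ^ 2 - 6 * (e : ℚ) * (r : ℚ) + 6 * (e : ℚ) - 3) := by
  have hr0 : (r : ℚ) ≠ 0 := Nat.cast_ne_zero.mpr (by omega)
  have he0 : (e : ℚ) ≠ 0 := Nat.cast_ne_zero.mpr (ne_zero_of_dvd_ne_zero r.succ_ne_zero hdvd)
  rw [Ncoef_four, Bcoef_two hr0, Bcoef_four hr0, Nat.cast_choose_two,
    Nat.cast_div hdvd he0]
  push_cast
  field_simp
  ring

/-- `N₄ = e²(r²-1)((e+3)r² - 6er + 6e - 3)`. -/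
theorem stmt13 (r e : ℕ) (hr : 2 ≤ r) (he : 1 ≤ e) (hdvd : e ∣ r + 1) :
    Ncoef r e 4 = (e : ℚ) ^ 2 * ((r : ℚ) ^ 2 - 1) *
      (((e : ℚ) + 3) * (r : ℚ) ^ 2 - 6 * (e : ℚ) * (r : ℚ) + 6 * (e : ℚ) - 3) :=
  stmt13_general r e hr hdvd
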